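/- Let H₁, H₂, K₁, K₂ be closed subspaces of L², a₁, a₂ ∈ L∞ with a₁K₁ ⊆ H₁ and a₂K₂ ⊆ H₂, and φ = ā₂·ψ·a₁ for ψ ∈ L∞. (a) If a₂ ∈ 𝒢L∞ and a₂K₂ = H₂, then a₁·ker T_φ^{K₁,K₂} ⊆ ker T_ψ^{H₁,H₂} and Ran T_φ^{K₁,K₂} ⊆ T_{ā₂}^{H₂,K₂}(Ran T_ψ^{H₁,H₂}). (b) If a₁ ∈ 𝒢L∞ and a₁K₁ = H₁, then ker T_ψ^{H₁,H₂} ⊆ a₁·ker T_φ^{K₁,K₂} and T_{ā₂}^{H₂,K₂}(Ran T_ψ^{H₁,H₂}) ⊆ Ran T_φ^{K₁,K₂}. (c) If a₁, a₂ ∈ 𝒢L∞ with a₁K₁ = H₁ and a₂K₂ = H₂, then a₁·ker T_φ^{K₁,K₂} = ker T_ψ^{H₁,H₂} and Ran T_φ^{K₁,K₂} = T_{ā₂}^{H₂,K₂}(Ran T_ψ^{H₁,H₂}). -/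

import Mathlib

open MeasureTheory

noncomputable section

/-! ## Setup: the circle, L², L∞, multiplication operators, Hardy space,
model spaces, and generalized Toeplitz operators -/

instance : Fact (0 < 2 * Real.pi) := ⟨by positivity⟩

/-- The normalized Lebesgue (Haar) measure `dθ/2π` on the circle. -/
abbrev μH : Measure (AddCircle (2 * Real.pi)) := AddCircle.haarAddCircle

/-- The Lebesgue space `L²` of the circle. -/
abbrev L2 : Type := Lp ℂ 2 μH

/-- The space `L∞` of essentially bounded functions on the circle. -/
abbrev Linf : Type := Lp ℂ ⊤ μH

/-- Pointwise (a.e.) multiplication on `L∞`. -/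
instance : Mul Linf :=
  ⟨fun f g => ((Lp.memLp g).smul (r := ⊤) (Lp.memLp f)).toLp (⇑f • ⇑g)⟩

/-- The constant function `1` as an element of `L∞`. -/
instance : One Linf := ⟨(memLp_const (1 : ℂ)).toLp (fun _ => (1 : ℂ))⟩

/-- Complex conjugation on `L∞`. -/
instance : Star Linf :=
  ⟨fun f => ((Complex.conjCLE.toContinuousLinearMap).comp_memLp' (Lp.memLp f)).toLp
    ((starRingEnd ℂ) ∘ ⇑f)⟩

/-- Multiplication of an `L²` function by an `L∞` function. -/
def mulFun (φ : Linf) (f : L2) : L2 :=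
  ((Lp.memLp f).smul (r := 2) (Lp.memLp φ)).toLp (⇑φ • ⇑f)

lemma mulFun_coe (φ : Linf) (f : L2) : mulFun φ f =ᵐ[μH] ⇑φ • ⇑f :=
  MemLp.coeFn_toLp _

lemma mulFun_norm_le (φ : Linf) (f : L2) : ‖mulFun φ f‖ ≤ ‖φ‖ * ‖f‖ := by
  rw [mulFun, Lp.norm_toLp, Lp.norm_def, Lp.norm_def, ← ENNReal.toReal_mul]
  refine ENNReal.toReal_mono ?_ ?_
  · exact ENNReal.mul_ne_top (Lp.eLpNorm_ne_top φ) (Lp.eLpNorm_ne_top f)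
  · exact eLpNorm_smul_le_eLpNorm_top_mul_eLpNorm 2 (Lp.aestronglyMeasurable f) ⇑φ

/-- The bounded multiplication operator `M_φ : L² → L²` for `φ ∈ L∞`. -/
def mulCLM (φ : Linf) : L2 →L[ℂ] L2 :=
  LinearMap.mkContinuous
    { toFun := mulFun φ
      map_add' := by
        intro f g
        apply Lp.ext
        filter_upwards [mulFun_coe φ (f + g), mulFun_coe φ f, mulFun_coe φ g,
          Lp.coeFn_add f g, Lp.coeFn_add (mulFun φ f) (mulFun φ g)] with x h1 h2 h3 h4 h5
        simp only [Pi.smul_apply', Pi.add_apply] at *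
        rw [h1, h5, h2, h3, h4]
        exact smul_add _ _ _
      map_smul' := by
        intro c f
        apply Lp.ext
        filter_upwards [mulFun_coe φ (c • f), mulFun_coe φ f,
          Lp.coeFn_smul c f, Lp.coeFn_smul c (mulFun φ f)] with x h1 h2 h3 h4
        simp only [Pi.smul_apply', Pi.smul_apply, RingHom.id_apply] at *
        rw [h1, h4, h2, h3]
        exact smul_comm _ _ _ }
    ‖φ‖ (mulFun_norm_le φ)

/-- The image `a·K = {a f : f ∈ K}` of a subspace `K ⊆ L²` under multiplication by `a ∈ L∞`. -/
def smulSub (a : Linf) (K : Submodule ℂ L2) : Submodule ℂ L2 :=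
  K.map (mulCLM a : L2 →ₗ[ℂ] L2)

/-- The Hardy space `H² = {f ∈ L² : f̂(n) = 0 for n < 0}`. -/
def Hardy : Submodule ℂ L2 where
  carrier := {f | ∀ n : ℤ, n < 0 → fourierBasis.repr f n = 0}
  add_mem' := by
    intro f g hf hg n hn
    rw [map_add, lp.coeFn_add, Pi.add_apply, hf n hn, hg n hn, add_zero]
  zero_mem' := by
    intro n hn
    rw [map_zero, lp.coeFn_zero]
    rfl
  smul_mem' := by
    intro c f hf n hn
    rw [_root_.map_smul, lp.coeFn_smul, Pi.smul_apply, hf n hn, smul_zero]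

lemma hardy_isClosed : IsClosed (Hardy : Set L2) := by
  have h : (Hardy : Set L2) =
      ⋂ n : {m : ℤ // m < 0}, {f : L2 | fourierBasis.repr f n.1 = 0} := by
    ext f
    constructor
    · intro hf
      exact Set.mem_iInter.2 fun n => hf n.1 n.2
    · intro hf n hn
      exact Set.mem_iInter.1 hf ⟨n, hn⟩
  rw [h]
  refine isClosed_iInter fun n => isClosed_eq ?_ continuous_const
  have : (fun f : L2 => fourierBasis.repr f n.1) =
      fun f : L2 => (innerSL ℂ (fourierBasis n.1)) f := by
    funext f
    exact fourierBasis.repr_apply_apply f n.1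
  rw [this]
  exact (innerSL ℂ (fourierBasis n.1)).continuous

instance : CompleteSpace Hardy := hardy_isClosed.completeSpace_coe

/-- The model space `K_θ = H² ⊖ θH² = H² ∩ (θH²)^⊥`. -/
def modelSpace (θ : Linf) : Submodule ℂ L2 :=
  Hardy ⊓ (smulSub θ Hardy)ᗮ

instance (θ : Linf) : CompleteSpace (modelSpace θ) := by
  refine IsClosed.completeSpace_coe (hs := ?_)
  have h : (modelSpace θ : Set L2) = (Hardy : Set L2) ∩ ((smulSub θ Hardy)ᗮ : Set L2) := rfl
  rw [h]
  exact hardy_isClosed.inter (smulSub θ Hardy).isClosed_orthogonal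

/-- The generalized Toeplitz operator `T_φ^{H₁,H₂} = P_{H₂} M_φ |_{H₁}`. -/
def genToeplitz (φ : Linf) (H₁ H₂ : Submodule ℂ L2) [CompleteSpace H₂] : H₁ →L[ℂ] H₂ :=
  H₂.orthogonalProjectionOnto.comp ((mulCLM φ).comp H₁.subtypeL)

/-- The orthogonal projection of `L²` onto `H`, viewed as an operator `L² → L²`. -/
def projL (H : Submodule ℂ L2) [CompleteSpace H] : L2 →L[ℂ] L2 :=
  H.subtypeL.comp H.orthogonalProjectionOnto

/-- `φ ∈ H∞`: all negative Fourier coefficients of `φ` vanish. -/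
def IsHardyInf (φ : Linf) : Prop := ∀ n : ℤ, n < 0 → fourierCoeff (⇑φ) n = 0

/-- `θ` is an inner function: `θ ∈ H∞` and `|θ| = 1` a.e. on the circle. -/
def IsInner (θ : Linf) : Prop :=
  IsHardyInf θ ∧ ∀ᵐ x ∂μH, ‖(θ : AddCircle (2 * Real.pi) → ℂ) x‖ = 1

/-- `a ∈ 𝒢H∞` with explicit inverse `b ∈ H∞`. -/
def GHinfPair (a b : Linf) : Prop := IsHardyInf a ∧ IsHardyInf b ∧ a * b = 1

/-- `a ∈ 𝒢H∞`: `a` is invertible in the algebra `H∞`. -/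
def IsGHinf (a : Linf) : Prop := ∃ b, GHinfPair a b

/-- `b ∈ 𝒢H̄∞`: `b` is the conjugate of an element of `𝒢H∞`. -/
def IsGHinfBar (b : Linf) : Prop := ∃ c, IsGHinf c ∧ b = star c

/-- `a ∈ 𝒢L∞` with explicit inverse `b`. -/
def GLinfPair (a b : Linf) : Prop := a * b = 1 ∧ b * a = 1

/-- `a ∈ 𝒢L∞`: `a` is invertible in the algebra `L∞`. -/
def IsGLinf (a : Linf) : Prop := ∃ b, GLinfPair a b

/-- The kernel of an operator between subspaces of `L²`, viewed as a subspace of `L²`. -/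
def subKer {K₁ K₂ : Submodule ℂ L2} (T : K₁ →L[ℂ] K₂) : Submodule ℂ L2 :=
  (LinearMap.ker (T : K₁ →ₗ[ℂ] K₂)).map K₁.subtype

/-- The range of an operator between subspaces of `L²`, viewed as a subspace of `L²`. -/
def subRan {K₁ K₂ : Submodule ℂ L2} (T : K₁ →L[ℂ] K₂) : Submodule ℂ L2 :=
  (LinearMap.range (T : K₁ →ₗ[ℂ] K₂)).map K₂.subtype

/-- The image of a subspace `S ⊆ K₁` under `T : K₁ → K₂`, viewed as a subspace of `L²`. -/
def opImage {K₁ K₂ : Submodule ℂ L2} (T : K₁ →L[ℂ] K₂) (S : Submodule ℂ K₁) :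
    Submodule ℂ L2 :=
  (S.map (T : K₁ →ₗ[ℂ] K₂)).map K₂.subtype

section Antilinear

variable {E : Type*} [NormedAddCommGroup E] [InnerProductSpace ℂ E]

/-- `C` is antilinear: `C(f + a g) = C f + ā C g`. -/
def IsAntilinearMap (C : E → E) : Prop :=
  ∀ (f g : E) (a : ℂ), C (f + a • g) = C f + (starRingEnd ℂ a) • C g

/-- `Cs` is the antilinear adjoint of `C`: `⟨C f, g⟩ = conj ⟨f, Cs g⟩`. -/
def IsAntilinearAdjointOf (C Cs : E → E) : Prop :=
  ∀ f g : E, (inner ℂ (C f) g : ℂ) = (starRingEnd ℂ) (inner ℂ f (Cs g) : ℂ)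

/-- `C` is an antilinear unitary: it is antilinear and its antilinear adjoint is its inverse. -/
def IsAntilinearUnitary (C : E → E) : Prop :=
  IsAntilinearMap C ∧ ∃ Cs : E → E, IsAntilinearAdjointOf C Cs ∧
    Function.LeftInverse Cs C ∧ Function.RightInverse Cs C

/-- `T` is complex selfadjoint with respect to `C` (with inverse `Cinv`): `C T C⁻¹ = T*`. -/
def IsComplexSelfadjointWith [CompleteSpace E] (T : E →L[ℂ] E) (C Cinv : E → E) : Prop :=
  ∀ f : E, C (T (Cinv f)) = ContinuousLinearMap.adjoint T f

end Antilinear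

/-! With `C = M_{a₁} : K₁ → H₁`, one has `T_φ^{K₁,K₂} = T_{ā₂}^{H₂,K₂} T_ψ^{H₁,H₂} C`:
the projection `P_{H₂}` inside `T_ψ` is harmless because `ā₂ H₂^⊥ ⊥ K₂`, which is
`a₂K₂ ⊆ H₂` read through the adjoint `M_{a₂}^* = M_{ā₂}`. If `a₂K₂ = H₂` then
`T_{ā₂}^{H₂,K₂}` is injective, and if `a₁K₁ = H₁` then `C` is onto; the kernel and range
relations are then linear algebra of the factorization `A ∘ B ∘ C`. -/

namespace LinearMap

variable {R M₁ N₁ N₂ M₂ : Type*} [Semiring R]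
  [AddCommMonoid M₁] [AddCommMonoid N₁] [AddCommMonoid N₂] [AddCommMonoid M₂]
  [Module R M₁] [Module R N₁] [Module R N₂] [Module R M₂]
  (A : N₂ →ₗ[R] M₂) (B : N₁ →ₗ[R] N₂) (C : M₁ →ₗ[R] N₁)

lemma map_ker_comp_comp_le_ker (hA : Function.Injective A) :
    (ker (A ∘ₗ B ∘ₗ C)).map C ≤ ker B := by
  rw [ker_comp_of_ker_eq_bot _ (ker_eq_bot_of_injective hA), ker_comp]
  exact Submodule.map_comap_le C (ker B)

lemma ker_le_map_ker_comp_comp (hC : Function.Surjective C) :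
    ker B ≤ (ker (A ∘ₗ B ∘ₗ C)).map C := by
  calc ker B = (ker (B ∘ₗ C)).map C := by
        rw [ker_comp, Submodule.map_comap_eq_of_surjective hC]
    _ ≤ (ker (A ∘ₗ B ∘ₗ C)).map C := Submodule.map_mono (ker_le_ker_comp _ A)

lemma range_comp_comp_le_map_range : range (A ∘ₗ B ∘ₗ C) ≤ (range B).map A := by
  rw [range_comp]
  exact Submodule.map_mono (range_comp_le_range C B)

lemma map_range_le_range_comp_comp (hC : Function.Surjective C) :
    (range B).map A ≤ range (A ∘ₗ B ∘ₗ C) := by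
  rw [range_comp, range_comp_of_range_eq_top B (range_eq_top.2 hC)]

end LinearMap

lemma coeFn_mulCLM (φ : Linf) (f : L2) : ⇑(mulCLM φ f) =ᵐ[μH] ⇑φ • ⇑f := mulFun_coe φ f

lemma Linf.coeFn_mul (f g : Linf) : ⇑(f * g) =ᵐ[μH] ⇑f • ⇑g := MemLp.coeFn_toLp _

lemma Linf.coeFn_star (a : Linf) : ⇑(star a) =ᵐ[μH] (starRingEnd ℂ) ∘ ⇑a :=
  MemLp.coeFn_toLp _

lemma mulCLM_mul (f g : Linf) (x : L2) : mulCLM (f * g) x = mulCLM f (mulCLM g x) := by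
  apply Lp.ext
  filter_upwards [coeFn_mulCLM (f * g) x, Linf.coeFn_mul f g, coeFn_mulCLM f (mulCLM g x),
    coeFn_mulCLM g x] with t h1 h2 h3 h4
  simp only [Pi.smul_apply', smul_eq_mul] at *
  rw [h1, h2, h3, h4, mul_assoc]

lemma inner_mulCLM_star_left (a : Linf) (u v : L2) :
    inner ℂ (mulCLM (star a) u) v = inner ℂ u (mulCLM a v) := by
  rw [L2.inner_def, L2.inner_def]
  refine integral_congr_ae ?_
  filter_upwards [coeFn_mulCLM (star a) u, Linf.coeFn_star a, coeFn_mulCLM a v] with t h1 h2 h3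
  simp only [Pi.smul_apply', smul_eq_mul, Function.comp_apply] at *
  rw [h1, h2, h3]
  simp only [RCLike.inner_apply, map_mul, starRingEnd_self_apply]
  ring

lemma mulCLM_mem_smulSub {a : Linf} {K : Submodule ℂ L2} {f : L2} (hf : f ∈ K) :
    mulCLM a f ∈ smulSub a K :=
  Submodule.mem_map_of_mem hf

lemma mulCLM_star_mem_orthogonal {a : Linf} {H K : Submodule ℂ L2} (h : smulSub a K ≤ H)
    {w : L2} (hw : w ∈ Hᗮ) : mulCLM (star a) w ∈ Kᗮ := by
  refine (Submodule.mem_orthogonal' K _).2 fun k hk => ?_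
  rw [inner_mulCLM_star_left]
  exact (Submodule.mem_orthogonal' H w).1 hw _ (h (mulCLM_mem_smulSub hk))

lemma orthogonalProjectionOnto_mulCLM_star_starProjection {a : Linf}
    {H K : Submodule ℂ L2} [CompleteSpace H] [CompleteSpace K] (h : smulSub a K ≤ H) (x : L2) :
    K.orthogonalProjectionOnto (mulCLM (star a) x) =
      K.orthogonalProjectionOnto (mulCLM (star a) (H.starProjection x)) := by
  rw [← sub_eq_zero, ← map_sub, ← map_sub]
  exact Submodule.orthogonalProjectionOnto_apply_of_mem_orthogonal
    (mulCLM_star_mem_orthogonal h (Submodule.sub_starProjection_mem_orthogonal (K := H) x))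

def mulCodRestrict (a : Linf) {K H : Submodule ℂ L2} (h : smulSub a K ≤ H) : K →ₗ[ℂ] H :=
  ((mulCLM a : L2 →ₗ[ℂ] L2) ∘ₗ K.subtype).codRestrict H fun f => h (mulCLM_mem_smulSub f.2)

lemma mulCodRestrict_surjective {a : Linf} {K H : Submodule ℂ L2} (h : smulSub a K = H) :
    Function.Surjective (mulCodRestrict a h.le) := by
  rintro ⟨g, hg⟩
  obtain ⟨f, hf, rfl⟩ := Submodule.mem_map.1 (h ▸ hg : g ∈ smulSub a K)
  exact ⟨⟨f, hf⟩, rfl⟩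

lemma genToeplitz_star_injective {a : Linf} {H K : Submodule ℂ L2} [CompleteSpace K]
    (h : smulSub a K = H) : Function.Injective (genToeplitz (star a) H K) := by
  refine (injective_iff_map_eq_zero _).2 fun g hg => Subtype.ext ?_
  have horth : mulCLM (star a) (g : L2) ∈ Kᗮ :=
    Submodule.orthogonalProjectionOnto_eq_zero_iff.1 hg
  obtain ⟨f, hf, hfg⟩ := Submodule.mem_map.1 (h ▸ g.2 : (g : L2) ∈ smulSub a K)
  have hzero : inner ℂ (g : L2) (mulCLM a f) = 0 := by
    rw [← inner_mulCLM_star_left, ← inner_conj_symm,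
      (Submodule.mem_orthogonal K _).1 horth f hf, map_zero]
  exact inner_self_eq_zero.1 (hfg ▸ hzero : inner ℂ (g : L2) (g : L2) = 0)

lemma genToeplitz_eq_comp {H₁ H₂ K₁ K₂ : Submodule ℂ L2} [CompleteSpace H₂] [CompleteSpace K₂]
    {a₁ a₂ ψ φ : Linf} (h₁ : smulSub a₁ K₁ ≤ H₁) (h₂ : smulSub a₂ K₂ ≤ H₂)
    (hφ : φ = star a₂ * ψ * a₁) :
    (genToeplitz φ K₁ K₂ : K₁ →ₗ[ℂ] K₂) =
      (genToeplitz (star a₂) H₂ K₂ : H₂ →ₗ[ℂ] K₂) ∘ₗ (genToeplitz ψ H₁ H₂ : H₁ →ₗ[ℂ] H₂) ∘ₗ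
        mulCodRestrict a₁ h₁ := by
  refine LinearMap.ext fun f => ?_
  change K₂.orthogonalProjectionOnto (mulCLM φ f) =
    K₂.orthogonalProjectionOnto (mulCLM (star a₂) (H₂.starProjection (mulCLM ψ (mulCLM a₁ f))))
  rw [← orthogonalProjectionOnto_mulCLM_star_starProjection h₂, hφ, mulCLM_mul, mulCLM_mul]

lemma smulSub_subKer {K₁ K₂ H : Submodule ℂ L2} {a : Linf} (h : smulSub a K₁ ≤ H)
    (T : K₁ →L[ℂ] K₂) :
    smulSub a (subKer T) =
      ((LinearMap.ker (T : K₁ →ₗ[ℂ] K₂)).map (mulCodRestrict a h)).map H.subtype := by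
  rw [smulSub, subKer, ← Submodule.map_comp, ← Submodule.map_comp]
  rfl

theorem statement13_general (H₁ H₂ K₁ K₂ : Submodule ℂ L2)
    [CompleteSpace H₂] [CompleteSpace K₂]
    (a₁ a₂ ψ φ : Linf)
    (h₁ : smulSub a₁ K₁ ≤ H₁) (h₂ : smulSub a₂ K₂ ≤ H₂)
    (hφ : φ = star a₂ * ψ * a₁) :
    (IsGLinf a₂ → smulSub a₂ K₂ = H₂ →
      smulSub a₁ (subKer (genToeplitz φ K₁ K₂)) ≤ subKer (genToeplitz ψ H₁ H₂) ∧
      subRan (genToeplitz φ K₁ K₂) ≤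
        opImage (genToeplitz (star a₂) H₂ K₂) (LinearMap.range (genToeplitz ψ H₁ H₂ : H₁ →ₗ[ℂ] H₂))) ∧
    (IsGLinf a₁ → smulSub a₁ K₁ = H₁ →
      subKer (genToeplitz ψ H₁ H₂) ≤ smulSub a₁ (subKer (genToeplitz φ K₁ K₂)) ∧
      opImage (genToeplitz (star a₂) H₂ K₂) (LinearMap.range (genToeplitz ψ H₁ H₂ : H₁ →ₗ[ℂ] H₂)) ≤
        subRan (genToeplitz φ K₁ K₂)) ∧
    (IsGLinf a₁ → IsGLinf a₂ → smulSub a₁ K₁ = H₁ → smulSub a₂ K₂ = H₂ →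
      smulSub a₁ (subKer (genToeplitz φ K₁ K₂)) = subKer (genToeplitz ψ H₁ H₂) ∧
      subRan (genToeplitz φ K₁ K₂) =
        opImage (genToeplitz (star a₂) H₂ K₂) (LinearMap.range (genToeplitz ψ H₁ H₂ : H₁ →ₗ[ℂ] H₂))) := by
  set Tφ := genToeplitz φ K₁ K₂
  set Tψ := genToeplitz ψ H₁ H₂
  set Ta := genToeplitz (star a₂) H₂ K₂
  have hT : (Tφ : K₁ →ₗ[ℂ] K₂) =
      (Ta : H₂ →ₗ[ℂ] K₂) ∘ₗ (Tψ : H₁ →ₗ[ℂ] H₂) ∘ₗ mulCodRestrict a₁ h₁ :=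
    genToeplitz_eq_comp h₁ h₂ hφ
  have partA (ha₂ : smulSub a₂ K₂ = H₂) : smulSub a₁ (subKer Tφ) ≤ subKer Tψ ∧
      subRan Tφ ≤ opImage Ta (LinearMap.range (Tψ : H₁ →ₗ[ℂ] H₂)) := by
    rw [smulSub_subKer h₁, subRan, opImage, hT]
    exact ⟨Submodule.map_mono (LinearMap.map_ker_comp_comp_le_ker _ _ _
        (genToeplitz_star_injective ha₂)),
      Submodule.map_mono (LinearMap.range_comp_comp_le_map_range _ _ _)⟩
  have partB (ha₁ : smulSub a₁ K₁ = H₁) : subKer Tψ ≤ smulSub a₁ (subKer Tφ) ∧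
      opImage Ta (LinearMap.range (Tψ : H₁ →ₗ[ℂ] H₂)) ≤ subRan Tφ := by
    rw [smulSub_subKer h₁, subRan, opImage, hT]
    exact ⟨Submodule.map_mono (LinearMap.ker_le_map_ker_comp_comp _ _ _
        (mulCodRestrict_surjective ha₁)),
      Submodule.map_mono (LinearMap.map_range_le_range_comp_comp _ _ _
        (mulCodRestrict_surjective ha₁))⟩
  exact ⟨fun _ ha₂ => partA ha₂, fun _ ha₁ => partB ha₁, fun _ _ ha₁ ha₂ =>
    ⟨(partA ha₂).1.antisymm (partB ha₁).1, (partA ha₂).2.antisymm (partB ha₁).2⟩⟩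

/-- Proposition 3.2 and Corollary 3.5: relations between kernels
and ranges of `T_φ^{K₁,K₂}` and `T_ψ^{H₁,H₂}` when `φ = ā₂ ψ a₁`, `a₁K₁ ⊆ H₁`,
`a₂K₂ ⊆ H₂`. -/
theorem statement13 (H₁ H₂ K₁ K₂ : Submodule ℂ L2)
    [CompleteSpace H₁] [CompleteSpace H₂] [CompleteSpace K₁] [CompleteSpace K₂]
    (a₁ a₂ ψ φ : Linf)
    (h₁ : smulSub a₁ K₁ ≤ H₁) (h₂ : smulSub a₂ K₂ ≤ H₂)
    (hφ : φ = star a₂ * ψ * a₁) :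
    (IsGLinf a₂ → smulSub a₂ K₂ = H₂ →
      smulSub a₁ (subKer (genToeplitz φ K₁ K₂)) ≤ subKer (genToeplitz ψ H₁ H₂) ∧
      subRan (genToeplitz φ K₁ K₂) ≤
        opImage (genToeplitz (star a₂) H₂ K₂) (LinearMap.range (genToeplitz ψ H₁ H₂ : H₁ →ₗ[ℂ] H₂))) ∧
    (IsGLinf a₁ → smulSub a₁ K₁ = H₁ →
      subKer (genToeplitz ψ H₁ H₂) ≤ smulSub a₁ (subKer (genToeplitz φ K₁ K₂)) ∧
      opImage (genToeplitz (star a₂) H₂ K₂) (LinearMap.range (genToeplitz ψ H₁ H₂ : H₁ →ₗ[ℂ] H₂)) ≤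
        subRan (genToeplitz φ K₁ K₂)) ∧
    (IsGLinf a₁ → IsGLinf a₂ → smulSub a₁ K₁ = H₁ → smulSub a₂ K₂ = H₂ →
      smulSub a₁ (subKer (genToeplitz φ K₁ K₂)) = subKer (genToeplitz ψ H₁ H₂) ∧
      subRan (genToeplitz φ K₁ K₂) =
        opImage (genToeplitz (star a₂) H₂ K₂) (LinearMap.range (genToeplitz ψ H₁ H₂ : H₁ →ₗ[ℂ] H₂))) :=
  statement13_general H₁ H₂ K₁ K₂ a₁ a₂ ψ φ h₁ h₂ hφ
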